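/- arXiv:1109.4374 — 6 statements merged into one kernel-verified Lean document; each statement's English description precedes it below -/
import Mathlib

section
/- Let A be an associative algebra, let I, X ∈ A satisfy [I, X] = I·X − X·I = X, and let k ≥ 1. Then ad(X)^k(I^k) = k!·(−X)^k, where ad(X)(a) = X·a − a·X. -/
open Finset fwdDiff

lemma fwdDiff_neg_one_pow (m : ℕ) :
    Δ_[(-1 : ℤ)] (fun y : ℤ => y ^ m) =
      fun y : ℤ => ∑ i ∈ range m, ((-1 : ℤ) ^ (m - i) * m.choose i) * y ^ i := by
  funext y
  have hb := add_pow y (-1 : ℤ) m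
  simp only [fwdDiff, hb, Finset.sum_range_succ, Nat.choose_self, Nat.sub_self, pow_zero,
    Nat.cast_one, mul_one, one_mul, add_sub_cancel_right]
  exact Finset.sum_congr rfl fun i _ => by ring

lemma monomial_sum_eq (m : ℕ) (c : ℕ → ℤ) :
    (fun y : ℤ => ∑ i ∈ range m, c i * y ^ i) =
      ∑ i ∈ range m, c i • (fun y : ℤ => y ^ i) := by
  funext y
  simp [smul_eq_mul, Finset.sum_apply]

lemma fwdDiff_iter_pow_eq_zero : ∀ n : ℕ, ∀ m : ℕ, m < n →
    (Δ_[(-1 : ℤ)])^[n] (fun y : ℤ => y ^ m) = fun _ => 0 := by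
  intro n
  induction n with
  | zero => intro m hm; omega
  | succ n ih =>
      intro m hm
      rw [Function.iterate_succ_apply, fwdDiff_neg_one_pow, monomial_sum_eq,
        fwdDiff_iter_finset_sum]
      funext y
      rw [Finset.sum_apply]
      apply Finset.sum_eq_zero
      intro i hi
      rw [fwdDiff_iter_const_smul, ih i (by simp at hi; omega)]
      simp

lemma fwdDiff_iter_pow_self : ∀ k : ℕ,
    (Δ_[(-1 : ℤ)])^[k] (fun y : ℤ => y ^ k) = fun _ => (-1 : ℤ) ^ k * k.factorial := by
  intro k
  induction k with
  | zero => funext y; simp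
  | succ k ih =>
      rw [Function.iterate_succ_apply, fwdDiff_neg_one_pow, monomial_sum_eq,
        Finset.sum_range_succ, fwdDiff_iter_add, fwdDiff_iter_finset_sum]
      funext y
      rw [Pi.add_apply, Finset.sum_apply]
      rw [Finset.sum_eq_zero (fun i hi => by
        rw [fwdDiff_iter_const_smul, fwdDiff_iter_pow_eq_zero k i (by simp at hi; omega)]
        simp)]
      rw [fwdDiff_iter_const_smul, ih]
      simp only [zero_add, Pi.smul_apply, smul_eq_mul]
      rw [Nat.choose_succ_self_right]
      have h1 : k + 1 - k = 1 := by omega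
      push_cast [Nat.factorial_succ, h1]
      ring

section ringpart

variable {A : Type*} [Ring A]

lemma fwdDiff_iter_smul_const (g : ℤ → ℤ) (c : A) (n : ℕ) :
    (Δ_[(-1 : ℤ)])^[n] (fun y : ℤ => g y • c) =
      fun y : ℤ => ((Δ_[(-1 : ℤ)])^[n] g y) • c := by
  induction n generalizing g with
  | zero => rfl
  | succ n ih =>
      rw [Function.iterate_succ_apply, Function.iterate_succ_apply]
      rw [show Δ_[(-1:ℤ)] (fun y : ℤ => g y • c) = fun y : ℤ => (Δ_[(-1:ℤ)] g y) • c from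
        funext fun y => (sub_smul _ _ _).symm]
      exact ih _

variable (I X : A)

lemma comm_one (hIX : I * X - X * I = X) (c : ℤ) :
    X * (I + c • (1:A)) = (I + (c - 1) • (1:A)) * X := by
  have hXI : X * I = I * X - X := by rw [sub_eq_iff_eq_add.mp hIX]; abel
  rw [mul_add, add_mul, hXI, mul_smul_comm, mul_one, smul_mul_assoc, one_mul, sub_smul, one_smul]
  abel

lemma comm_pow (hIX : I * X - X * I = X) (c : ℤ) (k : ℕ) :
    X * (I + c • (1:A)) ^ k = (I + (c - 1) • (1:A)) ^ k * X := by
  induction k with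
  | zero => simp
  | succ k ih =>
      rw [pow_succ', pow_succ', ← mul_assoc, comm_one I X hIX, mul_assoc, ih, ← mul_assoc]

lemma shift_prop (hIX : I * X - X * I = X) (k n : ℕ) : ∀ y : ℤ,
    X * ((Δ_[(-1:ℤ)])^[n] (fun y : ℤ => (I + y • (1:A)) ^ k)) y =
      ((Δ_[(-1:ℤ)])^[n] (fun y : ℤ => (I + y • (1:A)) ^ k)) (y - 1) * X := by
  induction n with
  | zero =>
      intro y
      simpa using comm_pow I X hIX y k
  | succ n ih =>
      intro y
      rw [Function.iterate_succ_apply']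
      simp only [fwdDiff]
      rw [mul_sub, sub_mul, ih, ih]
      norm_num [sub_eq_add_neg]

lemma main_iter (hIX : I * X - X * I = X) (k n : ℕ) :
    (fun a : A => X * a - a * X)^[n] (I ^ k) =
      ((Δ_[(-1:ℤ)])^[n] (fun y : ℤ => (I + y • (1:A)) ^ k)) 0 * X ^ n := by
  induction n with
  | zero => simp
  | succ n ih =>
      rw [Function.iterate_succ_apply', ih]
      have hs := shift_prop I X hIX k n 0
      rw [Function.iterate_succ_apply']
      simp only [fwdDiff]
      rw [sub_mul, ← mul_assoc, hs]
      rw [show (0 : ℤ) + -1 = 0 - 1 by ring]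
      simp [mul_assoc, ← pow_succ, ← pow_succ']

end ringpart

section final

variable {A : Type*} [Ring A] (I X : A)

lemma p_decomp (k : ℕ) :
    (fun y : ℤ => (I + y • (1:A)) ^ k) =
      fun y : ℤ => ∑ m ∈ range (k+1), (y ^ (k - m)) • (I ^ m * (k.choose m : A)) := by
  funext y
  rw [((Commute.one_right I).smul_right y).add_pow]
  refine Finset.sum_congr rfl fun m _ => ?_
  rw [smul_pow, one_pow, mul_smul_comm, mul_one, smul_mul_assoc]

lemma eval_final (k : ℕ) :
    ((Δ_[(-1:ℤ)])^[k] (fun y : ℤ => (I + y • (1:A)) ^ k)) 0 =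
      ((-1 : ℤ) ^ k * k.factorial) • (1 : A) := by
  rw [p_decomp]
  rw [show (fun y : ℤ => ∑ m ∈ range (k+1), (y ^ (k - m)) • (I ^ m * (k.choose m : A)))
      = ∑ m ∈ range (k+1), fun y : ℤ => (y ^ (k - m)) • (I ^ m * (k.choose m : A)) from
    funext fun y => by simp [Finset.sum_apply]]
  rw [fwdDiff_iter_finset_sum, Finset.sum_apply, Finset.sum_eq_single 0]
  · rw [fwdDiff_iter_smul_const]
    simp only [Nat.sub_zero, fwdDiff_iter_pow_self, pow_zero, Nat.choose_zero_right,
      Nat.cast_one, one_mul]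
  · intro m hm hm0
    rw [fwdDiff_iter_smul_const,
      fwdDiff_iter_pow_eq_zero k (k - m) (by simp at hm; omega)]
    simp
  · simp

end final

/-- Let `A` be an associative (unital) algebra over a field of characteristic
zero, let `I, X ∈ A` satisfy `[I, X] = I*X - X*I = X`, and let `k ≥ 1`.  Then
`ad(X)^k (I^k) = k! • (-X)^k`, where `ad(X) a = X*a - a*X`. -/
theorem ad_pow_eq_factorial_smul
    (F A : Type*) [Field F] [CharZero F] [Ring A] [Algebra F A]
    (I X : A) (h : I * X - X * I = X) (k : ℕ) (hk : 1 ≤ k) :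
    (fun a : A => X * a - a * X)^[k] (I ^ k) = (k.factorial : A) * (-X) ^ k := by
  rw [main_iter I X h k k, eval_final, zsmul_eq_mul, mul_one, neg_pow]
  push_cast
  simp only [one_pow, mul_one, ← mul_assoc, neg_pow X k,
    (Nat.cast_commute k.factorial ((-1:A)^k)).eq]
end

section
/- Let A be an associative algebra over a field of characteristic 0, let τ : A → End(W) be a representation, and let I, X ∈ A with [I, X] = X. Suppose p is a polynomial of degree k with τ(p(I)) = 0. Then τ(X)^k = 0. -/
open Polynomial

-- coefficient formula for taylor (-1) p - p
lemma coeff_taylor_sub {F : Type*} [Field F] (p : Polynomial F) (d m : ℕ)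
    (hdeg : p.natDegree = d + 1) (hm : d ≤ m) :
    (taylor (-1) p - p).coeff m = -((m+1 : ℕ) : F) * p.coeff (m+1) := by
  have h1 : (Polynomial.hasseDeriv m p).natDegree < 2 := by
    have := p.natDegree_hasseDeriv_le m
    omega
  have h2 : (taylor (-1) p).coeff m = (hasseDeriv m p).coeff 0 * (-1)^0
      + (hasseDeriv m p).coeff 1 * (-1)^1 := by
    rw [taylor_coeff, Polynomial.eval_eq_sum_range' h1]
    simp [Finset.sum_range_succ]
  have h3 : (hasseDeriv m p).coeff 0 = p.coeff m := by
    simp [hasseDeriv_coeff]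
  have h4 : (hasseDeriv m p).coeff 1 = ((m+1 : ℕ) : F) * p.coeff (m+1) := by
    rw [hasseDeriv_coeff]
    congr 2
    · rw [Nat.add_comm 1 m]; exact Nat.choose_succ_self_right m
    · omega
  rw [coeff_sub, h2, h3, h4]
  ring

lemma degree_taylor_sub {F : Type*} [Field F] [CharZero F] (p : Polynomial F) (d : ℕ)
    (hdeg : p.degree = ((d + 1 : ℕ) : WithBot ℕ)) :
    (taylor (-1) p - p).degree = (d : ℕ) := by
  have hnd : p.natDegree = d + 1 := natDegree_eq_of_degree_eq_some hdeg
  have hle : (taylor (-1) p - p).degree ≤ (d : ℕ) := by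
    rw [Polynomial.degree_le_iff_coeff_zero]
    intro m hm
    have hm' : d + 1 ≤ m := by exact_mod_cast Nat.add_one_le_iff.mpr (by exact_mod_cast hm)
    rw [coeff_taylor_sub p d m hnd (by omega)]
    have : p.coeff (m + 1) = 0 := coeff_eq_zero_of_natDegree_lt (by omega)
    simp [this]
  have hne : (taylor (-1) p - p).coeff d ≠ 0 := by
    rw [coeff_taylor_sub p d d hnd le_rfl]
    have h1 : p.coeff (d + 1) ≠ 0 := by
      rw [← hnd]; exact Polynomial.leadingCoeff_ne_zero.mpr (fun hz => by simp [hz] at hnd)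
    have h2 : ((d + 1 : ℕ) : F) ≠ 0 := Nat.cast_ne_zero.mpr (by omega)
    simp only [neg_mul, neg_ne_zero]
    exact mul_ne_zero h2 h1
  exact le_antisymm hle (Polynomial.le_degree_of_ne_zero hne)

section main
variable {F A : Type*} [Field F] [Ring A] [Algebra F A] (I X : A)

lemma commX (h : I * X - X * I = X) : ∀ n : ℕ, X * I ^ n = (I - 1) ^ n * X := by
  have h' : I * X = X + X * I := sub_eq_iff_eq_add.mp h
  have hXI : X * I = (I - 1) * X := by rw [sub_mul, one_mul, h']; abel
  intro n
  induction n with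
  | zero => simp
  | succ n ih =>
    rw [pow_succ, ← mul_assoc, ih, mul_assoc, hXI, pow_succ, mul_assoc]

lemma commP (h : I * X - X * I = X) (q : Polynomial F) :
    X * Polynomial.aeval I q = Polynomial.aeval (I - 1) q * X := by
  induction q using Polynomial.induction_on' with
  | add a b ha hb => simp [mul_add, add_mul, ha, hb]
  | monomial n a =>
    simp only [Polynomial.aeval_monomial]
    rw [← mul_assoc, show X * (algebraMap F A) a = algebraMap F A a * X from (Algebra.commutes a X).symm,
      mul_assoc, commX I X h n, ← mul_assoc]

lemma aeval_taylor_neg_one (q : Polynomial F) :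
    Polynomial.aeval I (taylor (-1) q) = Polynomial.aeval (I - 1) q := by
  rw [taylor_apply, Polynomial.aeval_comp]
  simp [sub_eq_add_neg]

end main

lemma key_lemma
    (F A W : Type*) [Field F] [CharZero F] [Ring A] [Algebra F A]
    [AddCommGroup W] [Module F W]
    (τ : A →ₐ[F] Module.End F W)
    (I X : A) (h : I * X - X * I = X) :
    ∀ (k : ℕ) (p : Polynomial F) (j : ℕ), p.degree = (k : ℕ) →
      τ (Polynomial.aeval I p) * τ X ^ j = 0 → τ X ^ (k + j) = 0 := by
  intro k
  induction k with
  | zero =>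
    intro p j hdeg hj
    have hpC : p = Polynomial.C (p.coeff 0) := Polynomial.eq_C_of_degree_le_zero (le_of_eq hdeg)
    have hc : p.coeff 0 ≠ 0 := by
      intro hc0
      rw [hpC, hc0, map_zero, Polynomial.degree_zero] at hdeg
      simp at hdeg
    rw [hpC] at hj
    rw [Polynomial.aeval_C, AlgHom.commutes] at hj
    rw [Algebra.algebraMap_eq_smul_one] at hj
    rw [smul_mul_assoc, one_mul] at hj
    rw [zero_add]
    exact (smul_eq_zero.mp hj).resolve_left hc
  | succ k ih =>
    intro p j hdeg hj
    set q : Polynomial F := taylor (-1) p - p with hq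
    have hqdeg : q.degree = (k : ℕ) := degree_taylor_sub p k hdeg
    set u := τ (Polynomial.aeval I p) with hu
    set x := τ X with hx
    have e1 : (Polynomial.aeval I q) * X = X * Polynomial.aeval I p - Polynomial.aeval I p * X := by
      rw [hq, map_sub, sub_mul, aeval_taylor_neg_one, ← commP I X h]
    have e2 : τ (Polynomial.aeval I q) * x = x * u - u * x := by
      rw [hx, hu, ← map_mul, e1, map_sub, map_mul, map_mul]
    have e3 : τ (Polynomial.aeval I q) * x ^ (j + 1) = 0 := by
      rw [pow_succ', ← mul_assoc, e2, sub_mul, mul_assoc, hj, mul_zero,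
        mul_assoc, ← pow_succ', pow_succ, ← mul_assoc, hj, zero_mul, sub_zero]
    have := ih q (j + 1) hqdeg e3
    rw [show k + 1 + j = k + (j + 1) by omega]
    exact this


/-- Let `A` be an associative algebra over a field `F` of characteristic zero,
`τ : A → End(W)` a representation (algebra homomorphism), and `I, X ∈ A` with `[I, X] = X`.
If `p` is a polynomial of degree `k` with `τ(p(I)) = 0`, then `τ(X)^k = 0`. -/
theorem rep_pow_eq_zero_of_poly_ann
    (F A W : Type*) [Field F] [CharZero F] [Ring A] [Algebra F A]
    [AddCommGroup W] [Module F W]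
    (τ : A →ₐ[F] Module.End F W)
    (I X : A) (h : I * X - X * I = X)
    (p : Polynomial F) (k : ℕ) (hp : p.degree = (k : ℕ))
    (hann : τ (Polynomial.aeval I p) = 0) :
    (τ X) ^ k = 0 := by
  have := key_lemma F A W τ I X h k p 0 hp (by rw [hann, zero_mul])
  simpa using this
end

section
/- Let A be a filtered algebra and M an A-module. Suppose F and Φ are two filtrations on M that are comparable, i.e., there exists k > 0 with Φ^i M ⊆ F^{i+k} M ⊆ Φ^{i+2k} M for all i ≥ 0. Then there exist filtrations Ψ_0, ..., Ψ_{2k} on M with Ψ_0^i M = F^{i+k} M, Ψ_{2k}^i M = Φ^{i+2k} M, and Ψ_j^i M ⊆ Ψ_{j+1}^i M ⊆ Ψ_j^{i+1} M ⊆ Ψ_{j+1}^{i+1} M for all i, j. -/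
open Submodule

variable {k A M : Type*} [Field k] [Ring A] [Algebra k A]
  [AddCommGroup M] [Module k M] [Module A M] [IsScalarTower k A M]

/-- A filtration on the algebra `A`: an increasing exhaustive family of `k`-subspaces
`FA i` with `1 ∈ FA 0` and `FA i * FA j ⊆ FA (i+j)`. -/
structure IsAlgFiltration (FA : ℕ → Submodule k A) : Prop where
  mono : Monotone FA
  one_mem : (1 : A) ∈ FA 0
  mul_mem : ∀ i j (a b : A), a ∈ FA i → b ∈ FA j → a * b ∈ FA (i + j)
  exhaustive : (⨆ i, FA i) = ⊤

/-- A filtration on the `A`-module `M` compatible with the filtration `FA` on `A`: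
an increasing exhaustive family of `k`-subspaces `FM i` with `FA i • FM j ⊆ FM (i+j)`. -/
structure IsModFiltration (FA : ℕ → Submodule k A) (FM : ℕ → Submodule k M) : Prop where
  mono : Monotone FM
  smul_mem : ∀ i j (a : A) (m : M), a ∈ FA i → m ∈ FM j → a • m ∈ FM (i + j)
  exhaustive : (⨆ i, FM i) = ⊤

/-- `F^iA · N`: the `k`-span of products `a • m` with `a ∈ FAi`, `m ∈ N`. -/
def smulSpan (FAi : Submodule k A) (N : Submodule k M) : Submodule k M :=
  Submodule.span k {y : M | ∃ a ∈ FAi, ∃ m ∈ N, y = a • m}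

/-- The filtration `FM` is good: every step is finitely generated over `F^0A`, and
eventually `F^{i+1}M = F^1A · F^iM`. -/
def IsGoodFiltration (FA : ℕ → Submodule k A) (FM : ℕ → Submodule k M) : Prop :=
  (∀ i, ∃ S : Finset M, (↑S : Set M) ⊆ (FM i : Set M) ∧
      FM i ≤ smulSpan (FA 0) (Submodule.span k (↑S : Set M))) ∧
  ∃ N : ℕ, ∀ i, N ≤ i → FM (i + 1) = smulSpan (FA 1) (FM i)

/-- If `F` and `Φ` are two comparable filtrations on `M`
(`Φ^i M ⊆ F^{i+k} M ⊆ Φ^{i+2k} M` for all `i`, for some `k > 0`), then there exist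
interpolating filtrations `Ψ_0, …, Ψ_{2k}` with `Ψ_0^i = F^{i+k}`, `Ψ_{2k}^i = Φ^{i+2k}`,
and `Ψ_j^i ⊆ Ψ_{j+1}^i ⊆ Ψ_j^{i+1} ⊆ Ψ_{j+1}^{i+1}` for all `i, j`. -/
theorem comparable_filtrations_interpolate
    (FA : ℕ → Submodule k A) (hFA : IsAlgFiltration FA)
    (F Φ : ℕ → Submodule k M)
    (hF : IsModFiltration FA F) (hΦ : IsModFiltration FA Φ)
    (K : ℕ) (hK : 0 < K)
    (hcomp : ∀ i, Φ i ≤ F (i + K) ∧ F (i + K) ≤ Φ (i + 2 * K)) :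
    ∃ Ψ : ℕ → ℕ → Submodule k M,
      (∀ j, j ≤ 2 * K → IsModFiltration FA (Ψ j)) ∧
      (∀ i, Ψ 0 i = F (i + K)) ∧
      (∀ i, Ψ (2 * K) i = Φ (i + 2 * K)) ∧
      (∀ j i, j < 2 * K →
        Ψ j i ≤ Ψ (j + 1) i ∧ Ψ (j + 1) i ≤ Ψ j (i + 1) ∧ Ψ j (i + 1) ≤ Ψ (j + 1) (i + 1)) := by
  refine ⟨fun j i => F (i + K) ⊔ Φ (i + j), ?_, ?_, ?_, ?_⟩
  · intro j _
    constructor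
    · intro a b hab
      exact sup_le_sup (hF.mono (by omega)) (hΦ.mono (by omega))
    · intro i j' a m ha hm
      rw [Submodule.mem_sup] at hm ⊢
      obtain ⟨y, hy, z, hz, rfl⟩ := hm
      refine ⟨a • y, ?_, a • z, ?_, (smul_add a y z).symm⟩
      · have := hF.smul_mem i (j' + K) a y ha hy
        rwa [show i + (j' + K) = i + j' + K by omega] at this
      · have := hΦ.smul_mem i (j' + j) a z ha hz
        rwa [show i + (j' + j) = i + j' + j by omega] at this
    · rw [eq_top_iff, ← hF.exhaustive]
      refine iSup_le fun i => le_iSup_of_le i ?_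
      exact le_sup_of_le_left (hF.mono (by omega))
  · intro i
    rw [sup_eq_left]
    exact le_trans ((hcomp i).1) (hF.mono (by omega))
  · intro i
    rw [sup_eq_right]
    exact (hcomp i).2
  · intro j i _
    refine ⟨sup_le_sup le_rfl (hΦ.mono (by omega)),
      sup_le_sup (hF.mono (by omega)) (hΦ.mono (by omega)),
      sup_le_sup le_rfl (hΦ.mono (by omega))⟩
end

section
/- Any two good filtrations on a finitely generated module M over a filtered algebra A (with A^0 generating finite steps) are comparable: if F and Φ are good filtrations, there exists k > 0 such that Φ^i M ⊆ F^{i+k} M ⊆ Φ^{i+2k} M for all i ≥ 0. -/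
open Submodule

variable {k A M : Type*} [Field k] [Ring A] [Algebra k A]
  [AddCommGroup M] [Module k M] [Module A M] [IsScalarTower k A M]

theorem compare_aux
    (FA : ℕ → Submodule k A)
    (F Φ : ℕ → Submodule k M)
    (hF : IsModFiltration FA F)
    (hΦ : IsModFiltration FA Φ)
    (hΦgood : IsGoodFiltration FA Φ) :
    ∃ c : ℕ, ∀ i, Φ i ≤ F (i + c) := by
  obtain ⟨hfin, N, hN⟩ := hΦgood
  obtain ⟨S, _hS1, hS2⟩ := hfin N
  have hex : ∀ s : M, ∃ j, s ∈ F j := by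
    intro s
    have hs : s ∈ ⨆ j, F j := hF.exhaustive ▸ Submodule.mem_top
    exact (Submodule.mem_iSup_of_directed F hF.mono.directed_le).1 hs
  choose j hj using hex
  set c := S.sup j with hc
  have hSle : Submodule.span k (↑S : Set M) ≤ F c := by
    apply Submodule.span_le.2
    intro s hs
    exact hF.mono (Finset.le_sup hs) (hj s)
  have hΦN : Φ N ≤ F c := by
    refine hS2.trans ?_
    apply Submodule.span_le.2
    rintro y ⟨a, ha, m, hm, rfl⟩
    have := hF.smul_mem 0 c a m ha (hSle hm)
    simpa using this
  refine ⟨c, ?_⟩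
  intro i
  induction i with
  | zero =>
    exact le_trans (hΦ.mono (Nat.zero_le N)) (le_trans hΦN (hF.mono (by omega)))
  | succ i ih =>
    rcases le_or_gt N i with h | h
    · rw [hN i h]
      apply Submodule.span_le.2
      rintro y ⟨a, ha, m, hm, rfl⟩
      have := hF.smul_mem 1 (i + c) a m ha (ih hm)
      have heq : 1 + (i + c) = i + 1 + c := by omega
      rwa [heq] at this
    · exact le_trans (hΦ.mono (by omega)) (le_trans hΦN (hF.mono (by omega)))

/-- Any two good filtrations `F`, `Φ` on a finitely generated `A`-module `M`
are comparable: there is `k > 0` with `Φ^i M ⊆ F^{i+k} M ⊆ Φ^{i+2k} M` for all `i ≥ 0`. -/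
theorem good_filtrations_comparable
    (FA : ℕ → Submodule k A) (hFA : IsAlgFiltration FA)
    (hMfg : ∃ S : Finset M, Submodule.span A (↑S : Set M) = ⊤)
    (F Φ : ℕ → Submodule k M)
    (hF : IsModFiltration FA F) (hΦ : IsModFiltration FA Φ)
    (hFgood : IsGoodFiltration FA F) (hΦgood : IsGoodFiltration FA Φ) :
    ∃ K : ℕ, 0 < K ∧ ∀ i, Φ i ≤ F (i + K) ∧ F (i + K) ≤ Φ (i + 2 * K) := by
  obtain ⟨c₁, h₁⟩ := compare_aux FA F Φ hF hΦ hΦgood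
  obtain ⟨c₂, h₂⟩ := compare_aux FA Φ F hΦ hF hFgood
  refine ⟨max c₁ c₂ + 1, by omega, fun i => ⟨?_, ?_⟩⟩
  · exact le_trans (h₁ i) (hF.mono (by omega))
  · exact le_trans (h₂ (i + (max c₁ c₂ + 1))) (hΦ.mono (by omega))
end

section
/- Let g be a Lie algebra over a field and M a g-module. If N is a subspace of g acting locally nilpotently with uniform bound, and I ∈ g satisfies [I, X] = X for all X ∈ N, then the following holds: if the universal enveloping algebra element p(I) annihilates M for some monic polynomial p of degree k, then X^k annihilates M for every X ∈ N. -/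
open Polynomial Finset

section Aux

variable {R : Type*} [CommRing R]

/-- Backward difference operator on polynomials. -/
noncomputable def deltaPoly (f : R[X]) : R[X] := f.comp (X - 1) - f

lemma coeff_comp_X_sub_one (f : R[X]) (j N : ℕ) (hN : f.natDegree < N) :
    (f.comp (X - 1)).coeff j
      = ∑ n ∈ range N, f.coeff n * ((-1 : R) ^ (n - j) * n.choose j) := by
  have hX : (X - 1 : R[X]) = X + C (-1) := by simp [sub_eq_add_neg]
  rw [hX, comp_eq_sum_left, sum_over_range' _ (fun n => by simp) N hN, finset_sum_coeff]
  refine Finset.sum_congr rfl fun n _ => ?_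
  rw [coeff_C_mul, coeff_X_add_C_pow]

lemma coeff_deltaPoly_high (f : R[X]) (k j : ℕ) (hf : f.natDegree ≤ k + 1)
    (hj : k + 1 ≤ j) : (deltaPoly f).coeff j = 0 := by
  have hcomp : (f.comp (X - 1)).coeff j = f.coeff j := by
    rw [coeff_comp_X_sub_one f j (k + 2) (by omega)]
    rw [Finset.sum_eq_single j]
    · simp
    · intro b hb hbj
      have hblt : b < j := by
        simp only [mem_range] at hb; omega
      rw [Nat.choose_eq_zero_of_lt hblt]
      simp
    · intro hjn
      have : f.coeff j = 0 := coeff_eq_zero_of_natDegree_lt (by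
        simp only [mem_range, not_lt] at hjn; omega)
      simp [this]
  simp [deltaPoly, coeff_sub, hcomp]

lemma coeff_deltaPoly_top (f : R[X]) (k : ℕ) (hf : f.natDegree ≤ k + 1) :
    (deltaPoly f).coeff k = -(k + 1 : R) * f.coeff (k + 1) := by
  rw [deltaPoly, coeff_sub, coeff_comp_X_sub_one f k (k + 2) (by omega),
    Finset.sum_range_succ, Finset.sum_range_succ]
  rw [Finset.sum_eq_zero (fun n hn => by
    rw [Nat.choose_eq_zero_of_lt (mem_range.mp hn)]; simp)]
  simp only [Nat.sub_self, pow_zero, Nat.choose_self, Nat.cast_one, mul_one, one_mul,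
    Nat.add_sub_cancel_left, pow_one, Nat.choose_succ_self_right]
  push_cast
  ring

lemma deltaPoly_iter (k : ℕ) :
    ∀ f : R[X], f.natDegree ≤ k →
      deltaPoly^[k] f = C ((-1 : R) ^ k * k.factorial * f.coeff k) := by
  induction k with
  | zero =>
    intro f hf
    have := Polynomial.eq_C_of_natDegree_le_zero hf
    simpa using this
  | succ k ih =>
    intro f hf
    have h1 : (deltaPoly f).natDegree ≤ k :=
      natDegree_le_iff_coeff_eq_zero.mpr fun N hN =>
        coeff_deltaPoly_high f k N hf (by omega)
    rw [Function.iterate_succ_apply, ih _ h1, coeff_deltaPoly_top f k hf]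
    congr 1
    push_cast [Nat.factorial_succ]
    ring

lemma ad_iter_aeval (F M : Type*) [Field F] [AddCommGroup M] [Module F M]
    (A B : Module.End F M) (hrel : A * B - B * A = B)
    (p : F[X]) (k : ℕ) :
    (fun T => B * T - T * B)^[k] (aeval A p)
      = aeval A (deltaPoly^[k] p) * B ^ k := by
  have h2 : A * B = B * A + B := sub_eq_iff_eq_add'.mp hrel
  have h1 : B * A = A * B - B := by rw [h2]; abel
  have hBA : B * A = (A - 1) * B := by rw [sub_mul, one_mul]; exact h1
  have hpow : ∀ n : ℕ, B * A ^ n = (A - 1) ^ n * B := by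
    intro n
    induction n with
    | zero => simp
    | succ n ihn =>
      rw [pow_succ, ← mul_assoc, ihn, mul_assoc, hBA, ← mul_assoc, ← pow_succ]
  have key2 : ∀ q : F[X], B * aeval A q = aeval A (q.comp (X - 1)) * B := by
    intro q
    have h3 : aeval A (q.comp (X - 1)) = aeval (A - 1) q := by
      rw [aeval_comp]; simp
    rw [h3]; clear h3
    induction q using Polynomial.induction_on' with
    | add f g hf hg => rw [map_add, map_add, mul_add, add_mul, hf, hg]
    | monomial n a =>
      rw [aeval_monomial, aeval_monomial, ← mul_assoc, ← Algebra.commutes a B,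
        mul_assoc, hpow, ← mul_assoc, mul_assoc]
  induction k with
  | zero => simp
  | succ k ih =>
    rw [Function.iterate_succ_apply', Function.iterate_succ_apply', ih]
    show B * (_ * B ^ k) - _ * B ^ k * B = _
    rw [deltaPoly, map_sub, sub_mul, ← mul_assoc, key2, mul_assoc, ← pow_succ',
      mul_assoc, ← pow_succ]

end Aux

/-- Let `g` be a Lie algebra over a field of characteristic zero and `M` a
`g`-module.  Let `N` be a subspace of `g` acting locally nilpotently with a uniform bound,
and let `I ∈ g` satisfy `[I, X] = X` for all `X ∈ N`.  If `p(I)` annihilates `M` for some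
monic polynomial `p` of degree `k`, then `X^k` annihilates `M` for every `X ∈ N`
(powers taken via the action on `M`). -/
theorem pow_annihilates_of_poly_annihilates
    (F g M : Type*) [Field F] [CharZero F]
    [LieRing g] [LieAlgebra F g]
    [AddCommGroup M] [Module F M] [LieRingModule g M] [LieModule F g M]
    (N : Submodule F g)
    (hnilp : ∃ m : ℕ, ∀ X ∈ N, (LieModule.toEnd F g M X) ^ m = 0)
    (I : g) (hI : ∀ X ∈ N, ⁅I, X⁆ = X)
    (p : Polynomial F) (k : ℕ) (hmonic : p.Monic) (hdeg : p.natDegree = k)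
    (hann : Polynomial.aeval (LieModule.toEnd F g M I) p = 0) :
    ∀ X ∈ N, (LieModule.toEnd F g M X) ^ k = 0 := by
  intro X hX
  set A := LieModule.toEnd F g M I with hA
  set B := LieModule.toEnd F g M X with hB
  have hrel : A * B - B * A = B := by
    letI := LieRing.ofAssociativeRing (A := Module.End F M)
    rw [← Ring.lie_def, ← LieHom.map_lie, hI X hX]
  have main := ad_iter_aeval F M A B hrel p k
  rw [hann, Function.iterate_fixed (by simp) k,
    deltaPoly_iter k p (le_of_eq hdeg)] at main
  have hcoeff : p.coeff k = 1 := by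
    rw [← hdeg]; exact hmonic.coeff_natDegree
  rw [hcoeff, mul_one, aeval_C, ← Algebra.smul_def] at main
  have hc : ((-1 : F) ^ k * k.factorial) ≠ 0 := by
    apply mul_ne_zero
    · exact pow_ne_zero _ (by norm_num)
    · exact_mod_cast Nat.cast_ne_zero.mpr k.factorial_ne_zero
  rcases smul_eq_zero.mp main.symm with h | h
  · exact absurd h hc
  · exact h
end

section
/- Let W = U ⊕ V ⊕ W′ be a direct sum decomposition of a finite-dimensional complex vector space, ξ ∈ U*, and let Ξ : Sym(W) → Sym(V ⊕ W′) be the algebra homomorphism sending u ∈ U to the scalar ξ(u) and acting as identity on V ⊕ W′. Let M be a finitely generated Sym(W)-module and L = M/(ker Ξ)·M, a Sym(V ⊕ W′)-module. If Supp(M) ⊆ ξ + (W′)*, i.e., every prime in the support restricts to ξ on U and to 0 on V, then V acts nilpotently on L, and hence L is finitely generated over Sym(W′). -/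
open MvPolynomial

/-- `Ξ : Sym(W) → Sym(V ⊕ W′)` for `W = U ⊕ V ⊕ W′`: the algebra homomorphism sending
each `U`-variable `u` to the scalar `ξ(u)` and fixing the `V ⊕ W′`-variables.
Here `Sym(W)` is modelled as `MvPolynomial (ιU ⊕ (ιV ⊕ ιW')) ℂ` for a basis indexed by
`ιU ⊕ (ιV ⊕ ιW')`, and `ξ ∈ U*` by its coordinates `ξ : ιU → ℂ`. -/
noncomputable def XiAlgHom (ιU ιV ιW' : Type*) (ξ : ιU → ℂ) :
    MvPolynomial (ιU ⊕ (ιV ⊕ ιW')) ℂ →ₐ[ℂ] MvPolynomial (ιV ⊕ ιW') ℂ :=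
  MvPolynomial.aeval (Sum.elim (fun u => MvPolynomial.C (ξ u)) (fun vw => MvPolynomial.X vw))

/-- Let `W = U ⊕ V ⊕ W′` be a finite-dimensional complex vector space,
`ξ ∈ U*`, and `Ξ : Sym(W) → Sym(V ⊕ W′)` as above.  Let `M` be a finitely generated
`Sym(W)`-module and `L = M/(ker Ξ)·M`.  If every prime in `Supp(M)` restricts to `ξ` on
`U` and to `0` on `V` (i.e. contains `X_u − ξ(u)` for `u ∈ U` and `X_v` for `v ∈ V`),
then every `v ∈ V` acts nilpotently on `L`, and `L` is finitely generated over
`Sym(W′)`. -/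
theorem support_condition_implies_nilpotent_and_finite
    (ιU ιV ιW' : Type*) [Finite ιU] [Finite ιV] [Finite ιW'] (ξ : ιU → ℂ)
    (M : Type*) [AddCommGroup M] [Module ℂ M]
    [Module (MvPolynomial (ιU ⊕ (ιV ⊕ ιW')) ℂ) M]
    [IsScalarTower ℂ (MvPolynomial (ιU ⊕ (ιV ⊕ ιW')) ℂ) M]
    [Module.Finite (MvPolynomial (ιU ⊕ (ιV ⊕ ιW')) ℂ) M]
    (hsupp : ∀ p ∈ Module.support (MvPolynomial (ιU ⊕ (ιV ⊕ ιW')) ℂ) M,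
      (∀ u : ιU, MvPolynomial.X (Sum.inl u) - MvPolynomial.C (ξ u) ∈ p.asIdeal) ∧
      (∀ v : ιV, MvPolynomial.X (Sum.inr (Sum.inl v)) ∈ p.asIdeal))
    (L : Type*) [AddCommGroup L] [Module ℂ L]
    [Module (MvPolynomial (ιU ⊕ (ιV ⊕ ιW')) ℂ) L]
    [IsScalarTower ℂ (MvPolynomial (ιU ⊕ (ιV ⊕ ιW')) ℂ) L]
    (π : M →ₗ[MvPolynomial (ιU ⊕ (ιV ⊕ ιW')) ℂ] L)
    (hπ : Function.Surjective π)
    (hkerπ : LinearMap.ker π =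
      (RingHom.ker (XiAlgHom ιU ιV ιW' ξ).toRingHom) • (⊤ : Submodule (MvPolynomial (ιU ⊕ (ιV ⊕ ιW')) ℂ) M)) :
    (∀ v : ιV, ∃ m : ℕ, ∀ x : L,
      ((MvPolynomial.X (Sum.inr (Sum.inl v)) : MvPolynomial (ιU ⊕ (ιV ⊕ ιW')) ℂ) ^ m) • x = 0) ∧
    (∃ T : Finset L, ∀ x : L, x ∈ Submodule.span ℂ
      {y : L | ∃ q : MvPolynomial ιW' ℂ, ∃ t ∈ T,
        y = (MvPolynomial.rename (fun w => (Sum.inr (Sum.inr w) : ιU ⊕ (ιV ⊕ ιW'))) q) • t}) := by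
  classical
  letI := Fintype.ofFinite ιV
  set R := MvPolynomial (ιU ⊕ (ιV ⊕ ιW')) ℂ with hR
  -- elements in every prime of the support are nilpotent on M
  have hrad : ∀ r : R, (∀ p ∈ Module.support R M, r ∈ p.asIdeal) →
      ∃ m : ℕ, ∀ x : M, r ^ m • x = 0 := by
    intro r hr
    have hmem : r ∈ (Module.annihilator R M).radical := by
      rw [Ideal.radical_eq_sInf]
      refine Submodule.mem_sInf.mpr ?_
      rintro J ⟨hJ1, hJ2⟩
      exact hr ⟨J, hJ2⟩ (by
        rw [Module.support_eq_zeroLocus, PrimeSpectrum.mem_zeroLocus]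
        exact fun a ha => hJ1 ha)
    obtain ⟨m, hm⟩ := hmem
    exact ⟨m, fun x => Module.mem_annihilator.mp hm x⟩
  -- nilpotency on L
  have hnil : ∀ v : ιV, ∃ m : ℕ, ∀ x : L,
      ((X (Sum.inr (Sum.inl v)) : R) ^ m) • x = 0 := by
    intro v
    obtain ⟨m, hm⟩ := hrad (X (Sum.inr (Sum.inl v))) (fun p hp => (hsupp p hp).2 v)
    refine ⟨m, fun x => ?_⟩
    obtain ⟨y, rfl⟩ := hπ x
    rw [← map_smul, hm, map_zero]
  refine ⟨hnil, ?_⟩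
  -- the kernel of Ξ acts by zero on L
  have hker : ∀ r ∈ RingHom.ker (XiAlgHom ιU ιV ιW' ξ).toRingHom, ∀ x : L, r • x = 0 := by
    intro r hr x
    obtain ⟨y, rfl⟩ := hπ x
    rw [← map_smul]
    have hmem : r • y ∈ LinearMap.ker π := by
      rw [hkerπ]; exact Submodule.smul_mem_smul hr Submodule.mem_top
    exact hmem
  -- X_u acts as the scalar ξ u on L
  have hU : ∀ u : ιU, ∀ x : L, (X (Sum.inl u) : R) • x = ξ u • x := by
    intro u x
    have h1 : (X (Sum.inl u) : R) - C (ξ u) ∈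
        RingHom.ker (XiAlgHom ιU ιV ιW' ξ).toRingHom := by
      simp [RingHom.mem_ker, XiAlgHom, algebraMap_eq]
    have h0 := hker _ h1 x
    rw [sub_smul, sub_eq_zero] at h0
    rw [h0, ← MvPolynomial.algebraMap_eq, algebraMap_smul]
  -- ℂ-scalars commute with the R-action
  have hcomm : ∀ (a : ℂ) (r : R) (x : L), r • a • x = a • (r • x) := by
    intro a r x
    rw [← algebraMap_smul R a x, ← mul_smul, mul_comm, mul_smul, algebraMap_smul]
  -- generators of M
  obtain ⟨S, hS⟩ := Module.finite_def.mp ‹Module.Finite R M›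
  choose n hn using hnil
  set N : ℕ := (Finset.univ.sup n) + 1 with hNdef
  have hN : ∀ v : ιV, ∀ x : L, ((X (Sum.inr (Sum.inl v)) : R) ^ N) • x = 0 := by
    intro v x
    have hle : n v ≤ N := le_trans (Finset.le_sup (Finset.mem_univ v)) (Nat.le_succ _)
    rw [show N = (N - n v) + n v from (Nat.sub_add_cancel hle).symm, pow_add, mul_smul,
      hn v x, smul_zero]
  set mono : (ιV → Fin N) → R := fun b => ∏ v, (X (Sum.inr (Sum.inl v)) : R) ^ (b v : ℕ)
    with hmono
  set T : Finset L := Finset.image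
      (fun p : (ιV → Fin N) × M => mono p.1 • π p.2) (Finset.univ ×ˢ S) with hT
  set f : ιW' → ιU ⊕ (ιV ⊕ ιW') := fun w => Sum.inr (Sum.inr w) with hf
  set Gen : Set L := {y : L | ∃ q : MvPolynomial ιW' ℂ, ∃ t ∈ T, y = (rename f q) • t}
    with hGen
  set P : Submodule ℂ L := Submodule.span ℂ Gen with hP
  -- P is stable under multiplication by each variable
  have hXmem : ∀ i : ιU ⊕ (ιV ⊕ ιW'), ∀ x ∈ P, (X i : R) • x ∈ P := by
    intro i x hx
    induction hx using Submodule.span_induction with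
    | mem y hy =>
      obtain ⟨q, t, ht, rfl⟩ := hy
      obtain ⟨⟨b, g⟩, hbg, rfl⟩ := Finset.mem_image.mp ht
      match i with
      | Sum.inl u =>
        rw [hU u]
        exact P.smul_mem _ (Submodule.subset_span ⟨q, _, ht, rfl⟩)
      | Sum.inr (Sum.inr w) =>
        rw [smul_smul, show (X (Sum.inr (Sum.inr w)) : R) * rename f q
            = rename f (X w * q) by rw [map_mul, rename_X]]
        exact Submodule.subset_span ⟨X w * q, _, ht, rfl⟩
      | Sum.inr (Sum.inl v) =>
        have hswap : (X (Sum.inr (Sum.inl v)) : R) • (rename f q • (mono b • π g))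
            = rename f q • ((X (Sum.inr (Sum.inl v)) : R) • (mono b • π g)) := by
          simp only [smul_smul]; congr 1; ring
        rw [hswap]
        have hsplit : mono b = (X (Sum.inr (Sum.inl v)) : R) ^ (b v : ℕ) *
            ∏ w ∈ Finset.univ.erase v, (X (Sum.inr (Sum.inl w)) : R) ^ (b w : ℕ) :=
          (Finset.mul_prod_erase _ _ (Finset.mem_univ v)).symm
        by_cases hlt : (b v : ℕ) + 1 < N
        · set b' : ιV → Fin N := Function.update b v ⟨(b v : ℕ) + 1, hlt⟩ with hb'
          have hmono' : (X (Sum.inr (Sum.inl v)) : R) * mono b = mono b' := by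
            have hs' : mono b' = (X (Sum.inr (Sum.inl v)) : R) ^ ((b v : ℕ) + 1) *
                ∏ w ∈ Finset.univ.erase v, (X (Sum.inr (Sum.inl w)) : R) ^ (b w : ℕ) := by
              simp only [hmono]
              rw [← Finset.mul_prod_erase _ _ (Finset.mem_univ v)]
              congr 1
              · simp [hb']
              · refine Finset.prod_congr rfl fun w hw => ?_
                rw [hb', Function.update_of_ne (Finset.ne_of_mem_erase hw)]
            rw [hs', hsplit]; ring
          rw [show (X (Sum.inr (Sum.inl v)) : R) • (mono b • π g) = mono b' • π g by
            rw [smul_smul, hmono']]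
          refine Submodule.subset_span ⟨q, mono b' • π g, ?_, rfl⟩
          exact Finset.mem_image.mpr ⟨(b', g), Finset.mem_product.mpr
            ⟨Finset.mem_univ _, (Finset.mem_product.mp hbg).2⟩, rfl⟩
        · have hNv : (b v : ℕ) + 1 = N := le_antisymm (b v).2 (not_lt.mp hlt)
          have hz : (X (Sum.inr (Sum.inl v)) : R) • (mono b • π g) = 0 := by
            rw [smul_smul, hsplit, ← mul_assoc, ← pow_succ', hNv, mul_smul, hN v]
          rw [hz, smul_zero]
          exact P.zero_mem
    | zero => rw [smul_zero]; exact P.zero_mem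
    | add y z _ _ hy hz => rw [smul_add]; exact P.add_mem hy hz
    | smul a y _ hy => rw [hcomm]; exact P.smul_mem a hy
  -- P is stable under the full R-action
  have hstab : ∀ r : R, ∀ x ∈ P, r • x ∈ P := by
    intro r
    induction r using MvPolynomial.induction_on with
    | C a => intro x hx; rw [← MvPolynomial.algebraMap_eq, algebraMap_smul]
             exact P.smul_mem a hx
    | add p q hp hq => intro x hx; rw [add_smul]; exact P.add_mem (hp x hx) (hq x hx)
    | mul_X p i hp => intro x hx; rw [mul_smul]; exact hp _ (hXmem i x hx)
  -- conclude
  refine ⟨T, fun x => ?_⟩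
  have hx : x ∈ Submodule.span R (π '' (S : Set M)) := by
    rw [Submodule.span_image, hS, Submodule.map_top, LinearMap.range_eq_top.mpr hπ]
    exact Submodule.mem_top
  refine Submodule.span_induction ?_ P.zero_mem (fun y z _ _ hy hz => P.add_mem hy hz)
    (fun r y _ hy => hstab r y hy) hx
  rintro y ⟨g, hg, rfl⟩
  have hb0 : mono (fun _ => (⟨0, Nat.succ_pos _⟩ : Fin N)) = 1 := by
    simp [hmono]
  refine Submodule.subset_span ⟨1, π g, ?_, by rw [map_one, one_smul]⟩
  refine Finset.mem_image.mpr ⟨((fun _ => ⟨0, Nat.succ_pos _⟩), g),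
    Finset.mem_product.mpr ⟨Finset.mem_univ _, hg⟩, ?_⟩
  rw [hb0, one_smul]
end
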